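/- Let V be a seminormed abelian group, T, S : V → V norm non-increasing homomorphisms, and z ∈ V. Suppose there is C ≥ 0 such that ‖(TS)^m(z) − T^m(S^m(z))‖ ≤ C for all m ∈ ℕ. Then lim_{m→∞} ‖(TS)^m(z) − z‖/m ≤ lim_{m→∞} ‖T^m(z) − z‖/m + lim_{m→∞} ‖S^m(z) − z‖/m. -/

import Mathlib

/-!
For a nonexpansive map `f`, the displacements `dist (f^[n] z) z` form a subadditive sequence, so by
Fekete's lemma `dist (f^[n] z) z / n` converges. Nonexpansiveness of `f^[m]` gives
`dist (f^[m] (g^[m] z)) z ≤ dist (g^[m] z) z + dist (f^[m] z) z`, and the bounded error between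
`(f ∘ g)^[m] z` and `f^[m] (g^[m] z)` disappears after dividing by `m`.
-/

open Filter Topology

theorem le_add_of_tendsto_div_of_le_add {u v w : ℕ → ℝ} {C L a b : ℝ}
    (huvw : ∀ n, u n ≤ C + (v n + w n)) (hu : Tendsto (fun n : ℕ => u n / n) atTop (𝓝 L))
    (hv : Tendsto (fun n : ℕ => v n / n) atTop (𝓝 a))
    (hw : Tendsto (fun n : ℕ => w n / n) atTop (𝓝 b)) : L ≤ a + b := by
  have hbound : Tendsto (fun n : ℕ => C / n + (v n / n + w n / n)) atTop (𝓝 (0 + (a + b))) :=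
    (tendsto_const_div_atTop_nhds_zero_nat C).add (hv.add hw)
  rw [zero_add] at hbound
  refine le_of_tendsto_of_tendsto' hu hbound fun n => ?_
  rw [← add_div, ← add_div]
  exact div_le_div_of_nonneg_right (huvw n) n.cast_nonneg

namespace LipschitzWith

variable {X : Type*} [PseudoMetricSpace X] {f g : X → X}

theorem dist_iterate_le (hf : LipschitzWith 1 f) (n : ℕ) (x y : X) :
    dist (f^[n] x) (f^[n] y) ≤ dist x y := by
  simpa using (hf.iterate n).dist_le_mul x y

theorem subadditive_dist_iterate (hf : LipschitzWith 1 f) (z : X) :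
    Subadditive fun n => dist (f^[n] z) z := fun m n =>
  calc dist (f^[m + n] z) z ≤ dist (f^[m] (f^[n] z)) (f^[m] z) + dist (f^[m] z) z := by
        rw [Function.iterate_add_apply]; exact dist_triangle _ _ _
    _ ≤ dist (f^[n] z) z + dist (f^[m] z) z := by gcongr; exact hf.dist_iterate_le m _ _
    _ = dist (f^[m] z) z + dist (f^[n] z) z := add_comm _ _

theorem tendsto_dist_iterate_div (hf : LipschitzWith 1 f) (z : X) :
    Tendsto (fun n : ℕ => dist (f^[n] z) z / n) atTop
      (𝓝 (hf.subadditive_dist_iterate z).lim) :=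
  (hf.subadditive_dist_iterate z).tendsto_lim ⟨0, by rintro _ ⟨n, rfl⟩; positivity⟩

theorem dist_iterate_iterate_le (hf : LipschitzWith 1 f) (m : ℕ) (z : X) :
    dist (f^[m] (g^[m] z)) z ≤ dist (f^[m] z) z + dist (g^[m] z) z :=
  calc dist (f^[m] (g^[m] z)) z ≤ dist (f^[m] (g^[m] z)) (f^[m] z) + dist (f^[m] z) z :=
        dist_triangle _ _ _
    _ ≤ dist (g^[m] z) z + dist (f^[m] z) z := by gcongr; exact hf.dist_iterate_le m _ _
    _ = dist (f^[m] z) z + dist (g^[m] z) z := add_comm _ _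

end LipschitzWith

theorem AddMonoidHom.lipschitzWith_one_of_norm_le {V : Type*} [SeminormedAddCommGroup V]
    (T : V →+ V) (hT : ∀ v, ‖T v‖ ≤ ‖v‖) : LipschitzWith 1 T :=
  AddMonoidHomClass.lipschitz_of_bound_nnnorm T 1 fun v => by
    simpa [← NNReal.coe_le_coe] using hT v

theorem limit_subadditive_of_commuting_general {V : Type*} [SeminormedAddCommGroup V]
    (T S : V →+ V) (hT : ∀ v, ‖T v‖ ≤ ‖v‖) (hS : ∀ v, ‖S v‖ ≤ ‖v‖) (z : V)
    (C : ℝ)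
    (hbd : ∀ m : ℕ, ‖(⇑T ∘ ⇑S)^[m] z - (⇑T)^[m] ((⇑S)^[m] z)‖ ≤ C) :
    ∃ L L₁ L₂ : ℝ,
      Tendsto (fun m : ℕ => ‖(⇑T ∘ ⇑S)^[m] z - z‖ / m) atTop (𝓝 L) ∧
      Tendsto (fun m : ℕ => ‖(⇑T)^[m] z - z‖ / m) atTop (𝓝 L₁) ∧
      Tendsto (fun m : ℕ => ‖(⇑S)^[m] z - z‖ / m) atTop (𝓝 L₂) ∧
      L ≤ L₁ + L₂ := by
  simp only [← dist_eq_norm] at hbd ⊢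
  have hT₁ := T.lipschitzWith_one_of_norm_le hT
  have hS₁ := S.lipschitzWith_one_of_norm_le hS
  have hTS₁ : LipschitzWith 1 (⇑T ∘ ⇑S) := by simpa using hT₁.comp hS₁
  have hTS := hTS₁.tendsto_dist_iterate_div z
  refine ⟨_, _, _, hTS, hT₁.tendsto_dist_iterate_div z, hS₁.tendsto_dist_iterate_div z, ?_⟩
  refine le_add_of_tendsto_div_of_le_add (C := C) (fun m => ?_) hTS
    (hT₁.tendsto_dist_iterate_div z) (hS₁.tendsto_dist_iterate_div z)
  calc dist ((⇑T ∘ ⇑S)^[m] z) z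
      ≤ dist ((⇑T ∘ ⇑S)^[m] z) ((⇑T)^[m] ((⇑S)^[m] z)) + dist ((⇑T)^[m] ((⇑S)^[m] z)) z :=
        dist_triangle _ _ _
    _ ≤ C + (dist ((⇑T)^[m] z) z + dist ((⇑S)^[m] z) z) :=
        add_le_add (hbd m) (hT₁.dist_iterate_iterate_le m z)

/-- Subadditivity for "commuting up to bounded error" maps: if
`‖(TS)^m z - T^m (S^m z)‖ ≤ C` for all `m`, then
`lim ‖(TS)^m z - z‖ / m ≤ lim ‖T^m z - z‖ / m + lim ‖S^m z - z‖ / m`. -/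
theorem limit_subadditive_of_commuting {V : Type*} [SeminormedAddCommGroup V]
    (T S : V →+ V) (hT : ∀ v, ‖T v‖ ≤ ‖v‖) (hS : ∀ v, ‖S v‖ ≤ ‖v‖) (z : V)
    (C : ℝ) (hC : 0 ≤ C)
    (hbd : ∀ m : ℕ, ‖(⇑T ∘ ⇑S)^[m] z - (⇑T)^[m] ((⇑S)^[m] z)‖ ≤ C) :
    ∃ L L₁ L₂ : ℝ,
      Tendsto (fun m : ℕ => ‖(⇑T ∘ ⇑S)^[m] z - z‖ / m) atTop (𝓝 L) ∧
      Tendsto (fun m : ℕ => ‖(⇑T)^[m] z - z‖ / m) atTop (𝓝 L₁) ∧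
      Tendsto (fun m : ℕ => ‖(⇑S)^[m] z - z‖ / m) atTop (𝓝 L₂) ∧
      L ≤ L₁ + L₂ :=
  limit_subadditive_of_commuting_general T S hT hS z C hbd
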